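/- arXiv:1503.08615 — 3 statements merged into one kernel-verified Lean document; each statement's English description precedes it below -/
import Mathlib

section
/- Let F : ℝ₊ → ℝ be continuous with F(0) = 0, let Θ_F(x) = arctan(F(x)) (valid since F has no singularities in this continuous case). Suppose G(κ) = G₀·(1 + O(κ⁻¹)) as κ → ∞ for a constant G₀ ∈ ℝ. Then for every sufficiently large n ∈ ℕ there exists a solution κₙ of tan(γκ) = G(κ) with κₙ = πn/γ + (1/γ)·arctan(G₀) + O(n⁻¹) as n → ∞, where γ > 0 is a fixed parameter. -/
/-!
A solution on the `n`-th branch of `tan`, i.e. with `γκ = πn + arctan (G κ)`, is a fixed point of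
`φ κ = (πn + arctan (G κ)) / γ`. Since `arctan` is `1`-Lipschitz and `κ ≥ πn / (2γ)` near that
branch, `φ` stays within `2C / (πn)` of `μ = (πn + arctan G₀) / γ`; so it maps the interval of
that radius around `μ` into itself and has a fixed point there by the intermediate value theorem.
-/

open Real Set Filter

namespace Real

theorem lipschitzWith_arctan : LipschitzWith 1 arctan :=
  lipschitzWith_of_nnnorm_deriv_le differentiable_arctan fun x => by
    rw [deriv_arctan, ← NNReal.coe_le_coe, coe_nnnorm, norm_div, norm_one, NNReal.coe_one,
      Real.norm_of_nonneg (by positivity)]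
    exact div_le_one_of_le₀ (by nlinarith [sq_nonneg x]) (by positivity)

theorem abs_arctan_sub_arctan_le (x y : ℝ) : |arctan x - arctan y| ≤ |x - y| := by
  simpa [dist_eq] using lipschitzWith_arctan.dist_le_mul x y

theorem tan_nat_mul_pi_add_arctan (n : ℕ) (x : ℝ) : tan (n * π + arctan x) = x := by
  rw [add_comm, tan_add_nat_mul_pi, tan_arctan]

end Real

theorem exists_tan_mul_eq_near_branch {γ G₀ C K : ℝ} (hγ : 0 < γ) (hC : 0 ≤ C) (hK : 0 < K)
    {G : ℝ → ℝ} (hGcont : ContinuousOn G (Ici K)) (hG : ∀ κ ≥ K, |G κ - G₀| ≤ C / κ)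
    {n : ℕ} (hn : 0 < n) (hlarge : K + π / (2 * γ) + 2 * C / π ≤ π / (2 * γ) * n) :
    ∃ κ ≥ K, tan (γ * κ) = G κ ∧ |κ - (π * n / γ + arctan G₀ / γ)| ≤ 2 * C / π / n := by
  set μ := π * n / γ + arctan G₀ / γ
  set ε := 2 * C / π / n
  set L := π / (2 * γ) * n
  have hn1 : (1 : ℝ) ≤ n := Nat.one_le_cast.2 hn
  have hL : 0 < L := by positivity
  have hε : 0 ≤ ε := by positivity
  have hεle : ε ≤ 2 * C / π := div_le_self (by positivity) hn1
  have hμε : L + K ≤ μ - ε := by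
    have : -(π / (2 * γ)) < arctan G₀ / γ := by
      rw [← neg_div, div_mul_eq_div_div, div_lt_div_iff_of_pos_right hγ, neg_div]
      exact neg_pi_div_two_lt_arctan G₀
    have : π * n / γ = 2 * L := by simp only [L]; field_simp
    linarith
  set φ : ℝ → ℝ := fun κ => (π * n + arctan (G κ)) / γ
  have hsub : Icc (μ - ε) (μ + ε) ⊆ Ici K := fun κ hκ => by
    simp only [mem_Ici]; linarith [hκ.1]
  have hcont : ContinuousOn φ (Icc (μ - ε) (μ + ε)) :=
    (continuousOn_const.add (continuous_arctan.comp_continuousOn (hGcont.mono hsub))).div_const γ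
  have hmaps : MapsTo φ (Icc (μ - ε) (μ + ε)) (Icc (μ - ε) (μ + ε)) := by
    intro κ hκ
    have hLκ : L ≤ κ := by linarith [hκ.1]
    rw [← Real.closedBall_eq_Icc, Metric.mem_closedBall, dist_eq]
    calc |φ κ - μ| = |arctan (G κ) - arctan G₀| / γ := by
          rw [← abs_of_pos hγ, ← abs_div]; congr 1; simp only [φ, μ]; field_simp; ring
      _ ≤ |G κ - G₀| / γ := div_le_div_of_nonneg_right (abs_arctan_sub_arctan_le _ _) hγ.le
      _ ≤ C / κ / γ := by gcongr; exact hG κ (hsub hκ)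
      _ ≤ C / L / γ := by gcongr
      _ = ε := by simp only [L, ε]; field_simp
  obtain ⟨κ, hκ, hfix⟩ := exists_mem_Icc_isFixedPt_of_mapsTo hcont (by linarith) hmaps
  refine ⟨κ, hsub hκ, ?_, abs_sub_le_iff.2 ⟨by linarith [hκ.2], by linarith [hκ.1]⟩⟩
  have hbranch : γ * κ = n * π + arctan (G κ) := by
    have : (π * n + arctan (G κ)) / γ = κ := hfix
    field_simp at this; linarith
  rw [hbranch, tan_nat_mul_pi_add_arctan]

/-- Asymptotic solutions of the transcendental equation `tan(γκ) = G(κ)`: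
if `G` is continuous on `[K,∞)` with `|G(κ) − G₀| ≤ C/κ`, then for all large `n` there is
a solution `κₙ` of `tan(γκₙ) = G(κₙ)` with
`κₙ = πn/γ + arctan(G₀)/γ + O(n⁻¹)`. -/
theorem stmt_6 (γ : ℝ) (hγ : 0 < γ) (G₀ : ℝ) (C K : ℝ) (hC : 0 < C) (hK : 0 < K)
    (G : ℝ → ℝ) (hGcont : ContinuousOn G (Set.Ici K))
    (hG : ∀ κ ≥ K, |G κ - G₀| ≤ C / κ) :
    ∃ C' : ℝ, ∃ N : ℕ, ∀ n : ℕ, n ≥ N →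
      ∃ κ : ℝ, κ ≥ K ∧ Real.tan (γ * κ) = G κ ∧
        |κ - (π * n / γ + Real.arctan G₀ / γ)| ≤ C' / n := by
  have hgrow : Tendsto (fun n : ℕ => π / (2 * γ) * n) atTop atTop :=
    tendsto_natCast_atTop_atTop.const_mul_atTop (by positivity)
  obtain ⟨N, hN⟩ := eventually_atTop.1 <|
    (hgrow.eventually_ge_atTop (K + π / (2 * γ) + 2 * C / π)).and (eventually_gt_atTop 0)
  exact ⟨2 * C / π, N, fun n hn =>
    exists_tan_mul_eq_near_branch hγ hC.le hK hGcont hG (hN n hn).2 (hN n hn).1⟩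
end

section
/- Let λₙ > 0 with λₙ → 0, and define μₙ = λₙ + Υ·λₙ^{3/2} + O(λₙ²) for a fixed complex constant Υ with Im Υ > 0. Then |Im μₙ| = Im Υ·|Re μₙ|^{3/2} + O((Re μₙ)²) as n → ∞. -/
/-! With `s = √λ` the hypothesis reads `μ = s² + Υ s³ + O(s⁴)`. Hence `Re μ = s² + O(s³) ~ s²` and
`Im μ = Im Υ · s³ + O(s⁴)`. Writing `|Re μ|^{3/2} = t³` with `t = √|Re μ| = O(s)`, the bound
`x² + xy + y² ≤ (x + y)²` gives `|t³ - |s|³| ≤ |t² - s²| (t + |s|) = O(s³ · s)`.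
So `|Im μ| - Im Υ · |Re μ|^{3/2} = O(s⁴) = O((Re μ)²)`. -/

open Real Filter Topology Asymptotics

lemma Real.rpow_three_div_two_eq_sqrt_pow {x : ℝ} (hx : 0 ≤ x) : x ^ (3 / 2 : ℝ) = √x ^ 3 := by
  rw [rpow_div_two_eq_sqrt 3 hx]
  norm_cast

lemma abs_pow_three_sub_pow_three_le {x y : ℝ} (hx : 0 ≤ x) (hy : 0 ≤ y) :
    |x ^ 3 - y ^ 3| ≤ |x ^ 2 - y ^ 2| * (x + y) :=
  calc |x ^ 3 - y ^ 3| = |x - y| * (x ^ 2 + x * y + y ^ 2) := by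
        rw [show x ^ 3 - y ^ 3 = (x - y) * (x ^ 2 + x * y + y ^ 2) by ring, abs_mul,
          abs_of_nonneg (by nlinarith [mul_nonneg hx hy] : 0 ≤ x ^ 2 + x * y + y ^ 2)]
    _ ≤ |x - y| * ((x + y) * (x + y)) := by gcongr; nlinarith [mul_nonneg hx hy]
    _ = |x ^ 2 - y ^ 2| * (x + y) := by
        rw [show x ^ 2 - y ^ 2 = (x - y) * (x + y) by ring, abs_mul,
          abs_of_nonneg (add_nonneg hx hy)]
        ring

lemma abs_abs_sub_mul_abs_rpow_le {a b c s : ℝ} (hc : 0 ≤ c) :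
    |(|b|) - c * |a| ^ (3 / 2 : ℝ)| ≤ |b - c * s ^ 3| + c * (|a - s ^ 2| * (√|a| + |s|)) := by
  have hcube : |(|s|) ^ 3 - (√|a|) ^ 3| ≤ |a - s ^ 2| * (√|a| + |s|) :=
    calc |(|s|) ^ 3 - (√|a|) ^ 3| ≤ |(|s|) ^ 2 - (√|a|) ^ 2| * (|s| + √|a|) :=
          abs_pow_three_sub_pow_three_le (abs_nonneg s) (sqrt_nonneg _)
      _ = |(|a|) - (|s ^ 2|)| * (√|a| + |s|) := by
          rw [sq_sqrt (abs_nonneg a), sq_abs, abs_of_nonneg (sq_nonneg s), abs_sub_comm, add_comm]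
      _ ≤ |a - s ^ 2| * (√|a| + |s|) :=
          mul_le_mul_of_nonneg_right (abs_abs_sub_abs_le_abs_sub a (s ^ 2)) (by positivity)
  calc |(|b|) - c * |a| ^ (3 / 2 : ℝ)|
      = |(|b| - |c * s ^ 3|) + c * (|s| ^ 3 - (√|a|) ^ 3)| := by
        rw [rpow_three_div_two_eq_sqrt_pow (abs_nonneg a), abs_mul, abs_of_nonneg hc, abs_pow]
        ring_nf
    _ ≤ |(|b|) - (|c * s ^ 3|)| + c * |(|s|) ^ 3 - (√|a|) ^ 3| :=
        (abs_add_le _ _).trans_eq (by rw [abs_mul c (|s| ^ 3 - (√|a|) ^ 3), abs_of_nonneg hc])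
    _ ≤ |b - c * s ^ 3| + c * (|a - s ^ 2| * (√|a| + |s|)) :=
        add_le_add (abs_abs_sub_abs_le_abs_sub b (c * s ^ 3)) (mul_le_mul_of_nonneg_left hcube hc)

theorem isBigO_abs_im_sub_mul_abs_re_rpow {α : Type*} {l : Filter α} {s : α → ℝ} {μ : α → ℂ}
    {Υ : ℂ} (hs : Tendsto s l (𝓝 0)) (hΥ : 0 ≤ Υ.im)
    (h : (fun x => μ x - ((s x : ℂ) ^ 2 + Υ * (s x : ℂ) ^ 3)) =O[l] fun x => s x ^ 4) :
    (fun x => |(|(μ x).im|) - Υ.im * |(μ x).re| ^ (3 / 2 : ℝ)|) =O[l] fun x => (μ x).re ^ 2 := by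
  have hre_err : (fun x => (μ x).re - s x ^ 2 - Υ.re * s x ^ 3) =O[l] fun x => s x ^ 4 :=
    .trans (isBigO_of_le _ fun x => by
      rw [Real.norm_eq_abs]
      convert Complex.abs_re_le_norm (μ x - ((s x : ℂ) ^ 2 + Υ * (s x : ℂ) ^ 3)) using 2
      simp only [← Complex.ofReal_pow, Complex.sub_re, Complex.add_re, Complex.ofReal_re,
        Complex.mul_re, Complex.ofReal_im, mul_zero, sub_zero]
      ring) h
  have him_err : (fun x => (μ x).im - Υ.im * s x ^ 3) =O[l] fun x => s x ^ 4 :=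
    .trans (isBigO_of_le _ fun x => by
      rw [Real.norm_eq_abs]
      convert Complex.abs_im_le_norm (μ x - ((s x : ℂ) ^ 2 + Υ * (s x : ℂ) ^ 3)) using 2
      simp [← Complex.ofReal_pow]) h
  have h43 : (fun x => s x ^ 4) =O[l] fun x => s x ^ 3 :=
    ((isLittleO_pow_pow (by norm_num : 3 < 4)).comp_tendsto hs).isBigO
  have hre : (fun x => (μ x).re - s x ^ 2) =O[l] fun x => s x ^ 3 :=
    ((hre_err.trans h43).add ((isBigO_refl _ _).const_mul_left Υ.re)).congr_left
      fun x => by ring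
  have hequiv : (fun x => (μ x).re) ~[l] fun x => s x ^ 2 :=
    (hre.trans_isLittleO
      ((isLittleO_pow_pow (by norm_num : 2 < 3)).comp_tendsto hs)).isEquivalent
  have hsqrt : (fun x => √|(μ x).re|) =O[l] s :=
    .of_pow two_ne_zero <| hequiv.isBigO.abs_left.congr_left
      fun x => (sq_sqrt (abs_nonneg _)).symm
  have hbound : (fun x => |(μ x).im - Υ.im * s x ^ 3|
      + Υ.im * (|(μ x).re - s x ^ 2| * (√|(μ x).re| + |s x|))) =O[l] fun x => s x ^ 4 :=
    him_err.abs_left.add <|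
      ((hre.abs_left.mul (hsqrt.add (isBigO_refl _ _).abs_left)).const_mul_left Υ.im).congr_right
        fun x => by ring
  refine .trans (isBigO_of_le _ fun x => ?_) (hbound.trans ?_)
  · simpa only [Real.norm_eq_abs, abs_abs] using
      (abs_abs_sub_mul_abs_rpow_le hΥ).trans (le_abs_self _)
  · exact (hequiv.isBigO_symm.pow 2).congr_left fun x => by ring

/-- If `λₙ > 0`, `λₙ → 0` and `μₙ = λₙ + Υλₙ^{3/2} + O(λₙ²)` with `Im Υ > 0`, then
`|Im μₙ| = Im Υ · |Re μₙ|^{3/2} + O((Re μₙ)²)`. -/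
theorem stmt_12 (lam : ℕ → ℝ) (hpos : ∀ n, 0 < lam n)
    (hlim : Filter.Tendsto lam Filter.atTop (nhds 0))
    (Υ : ℂ) (hΥ : 0 < Υ.im) (μ : ℕ → ℂ)
    (h : ∃ C : ℝ, ∀ n, ‖μ n - ((lam n : ℂ) + Υ * (lam n : ℂ) ^ ((3 : ℂ) / 2))‖
      ≤ C * lam n ^ 2) :
    ∃ C' : ℝ, ∃ N : ℕ, ∀ n : ℕ, n ≥ N →
      |(|(μ n).im|) - Υ.im * |(μ n).re| ^ ((3 : ℝ) / 2)| ≤ C' * (μ n).re ^ 2 := by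
  obtain ⟨C, hC⟩ := h
  set s : ℕ → ℝ := fun n => √(lam n)
  have hs : Tendsto s atTop (𝓝 0) := by simpa using hlim.sqrt
  have hμ : (fun n => μ n - ((s n : ℂ) ^ 2 + Υ * (s n : ℂ) ^ 3)) =O[atTop] fun n => s n ^ 4 := by
    refine .of_bound C (.of_forall fun n => ?_)
    have hsq : s n ^ 2 = lam n := sq_sqrt (hpos n).le
    have hcube : (lam n : ℂ) ^ ((3 : ℂ) / 2) = (s n : ℂ) ^ 3 := by
      rw [← Complex.ofReal_pow, ← rpow_three_div_two_eq_sqrt_pow (hpos n).le,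
        Complex.ofReal_cpow (hpos n).le]
      norm_num
    rw [← Complex.ofReal_pow, hsq, ← hcube, Real.norm_eq_abs, abs_of_nonneg (by positivity),
      show s n ^ 4 = lam n ^ 2 by rw [← hsq]; ring]
    exact hC n
  obtain ⟨C', hC'⟩ := (isBigO_abs_im_sub_mul_abs_re_rpow hs hΥ.le hμ).bound
  obtain ⟨N, hN⟩ := eventually_atTop.1 hC'
  exact ⟨C', N, fun n hn => by
    simpa only [Real.norm_eq_abs, abs_abs, abs_pow, sq_abs] using hN n hn⟩
end

section
/- Define w₀(z) = 2·arcsinh(√z/2) and β(z) = (1/2)·(w₀(z) + sinh(w₀(z))) for z > 0. Then β(z)² = z + z²/12 + O(z³) as z → 0⁺. -/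
/-! With `t = √z / 2` one has `β(z) = arsinh t + t √(1 + t²)`, whose derivative in `t` is
`2 √(1 + t²)`. Sandwiching `√(1 + t²)` between `1 + t²/2 - t⁴/8` and `1 + t²/2` and integrating
from `0` gives `β = 2t + t³/3 - e` with `0 ≤ e ≤ t⁵/20`; squaring and substituting `z = 4t²`
yields `β² = z + z²/12 + O(z³)`, in fact with error at most `z³/64` for `z < 4`. -/

open Real

lemma sqrt_one_add_sq_le (x : ℝ) : √(1 + x ^ 2) ≤ 1 + x ^ 2 / 2 :=
  (sqrt_le_left (by positivity)).2 (by nlinarith [sq_nonneg (x ^ 2)])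

lemma le_sqrt_one_add_sq (x : ℝ) : 1 + x ^ 2 / 2 - x ^ 4 / 8 ≤ √(1 + x ^ 2) := by
  rcases le_or_gt (1 + x ^ 2 / 2 - x ^ 4 / 8) 0 with h | h
  · exact h.trans (sqrt_nonneg _)
  · rw [le_sqrt h.le (by positivity)]
    nlinarith [sq_nonneg x, pow_nonneg (sq_nonneg x) 3]

lemma sub_le_sub_of_hasDerivAt_le {f g f' g' : ℝ → ℝ} (hf : ∀ x, HasDerivAt f (f' x) x)
    (hg : ∀ x, HasDerivAt g (g' x) x) (hle : f' ≤ g') {a b : ℝ} (hab : a ≤ b) :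
    f b - f a ≤ g b - g a := by
  have : Monotone (g - f) :=
    monotone_of_hasDerivAt_nonneg (fun x ↦ (hg x).sub (hf x)) (sub_nonneg.2 hle)
  have := this hab
  simp only [Pi.sub_apply] at this
  linarith

lemma hasDerivAt_arsinh_add_mul_sqrt (x : ℝ) :
    HasDerivAt (fun t ↦ arsinh t + t * √(1 + t ^ 2)) (2 * √(1 + x ^ 2)) x := by
  have hsq : HasDerivAt (fun t ↦ √(1 + t ^ 2)) (2 * x / (2 * √(1 + x ^ 2))) x := by
    simpa using ((hasDerivAt_pow 2 x).const_add 1).sqrt (by positivity)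
  refine ((hasDerivAt_arsinh x).add ((hasDerivAt_id' x).mul hsq)).congr_deriv ?_
  field_simp
  rw [sq_sqrt (by positivity)]
  ring

lemma arsinh_add_mul_sqrt_le {t : ℝ} (ht : 0 ≤ t) :
    arsinh t + t * √(1 + t ^ 2) ≤ 2 * t + t ^ 3 / 3 := by
  have hpoly (x : ℝ) : HasDerivAt (fun t : ℝ ↦ 2 * t + t ^ 3 / 3) (2 * (1 + x ^ 2 / 2)) x := by
    refine (((hasDerivAt_id' x).const_mul 2).add ((hasDerivAt_pow 3 x).div_const 3)).congr_deriv ?_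
    norm_num
    ring
  have := sub_le_sub_of_hasDerivAt_le hasDerivAt_arsinh_add_mul_sqrt hpoly
    (fun x ↦ by simpa using sqrt_one_add_sq_le x) ht
  simpa using this

lemma le_arsinh_add_mul_sqrt {t : ℝ} (ht : 0 ≤ t) :
    2 * t + t ^ 3 / 3 - t ^ 5 / 20 ≤ arsinh t + t * √(1 + t ^ 2) := by
  have hpoly (x : ℝ) : HasDerivAt (fun t : ℝ ↦ 2 * t + t ^ 3 / 3 - t ^ 5 / 20)
      (2 * (1 + x ^ 2 / 2 - x ^ 4 / 8)) x := by
    refine ((((hasDerivAt_id' x).const_mul 2).add ((hasDerivAt_pow 3 x).div_const 3)).sub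
      ((hasDerivAt_pow 5 x).div_const 20)).congr_deriv ?_
    norm_num
    ring
  have := sub_le_sub_of_hasDerivAt_le hpoly hasDerivAt_arsinh_add_mul_sqrt
    (fun x ↦ by simpa using le_sqrt_one_add_sq x) ht
  simpa using this

lemma half_two_mul_arsinh_add_sinh (t : ℝ) :
    1 / 2 * (2 * arsinh t + sinh (2 * arsinh t)) = arsinh t + t * √(1 + t ^ 2) := by
  rw [sinh_two_mul, sinh_arsinh, cosh_arsinh]
  ring

lemma abs_sq_sub_le_pow_six {t b : ℝ} (ht₀ : 0 ≤ t) (ht₁ : t ≤ 1)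
    (hlo : 2 * t + t ^ 3 / 3 - t ^ 5 / 20 ≤ b) (hhi : b ≤ 2 * t + t ^ 3 / 3) :
    |b ^ 2 - (4 * t ^ 2 + 4 * t ^ 4 / 3)| ≤ t ^ 6 := by
  set e := 2 * t + t ^ 3 / 3 - b
  have hb : b = 2 * t + t ^ 3 / 3 - e := by ring
  have he₀ : 0 ≤ e := by linarith
  have he₁ : e ≤ t ^ 5 / 20 := by linarith
  have hexp : b ^ 2 - (4 * t ^ 2 + 4 * t ^ 4 / 3) =
      t ^ 6 / 9 - 2 * e * (2 * t + t ^ 3 / 3) + e ^ 2 := by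
    rw [hb]; ring
  have h8 : t ^ 8 ≤ t ^ 6 := pow_le_pow_of_le_one ht₀ ht₁ (by norm_num)
  have h10 : t ^ 10 ≤ t ^ 6 := pow_le_pow_of_le_one ht₀ ht₁ (by norm_num)
  rw [hexp, abs_le]
  constructor
  · nlinarith [pow_nonneg ht₀ 3]
  · nlinarith [pow_le_pow_left₀ he₀ he₁ 2,
      mul_nonneg he₀ (by positivity : (0 : ℝ) ≤ 2 * t + t ^ 3 / 3)]

/-- With `w₀(z) = 2·arcsinh(√z/2)` and `β(z) = (w₀(z) + sinh(w₀(z)))/2`, one has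
`β(z)² = z + z²/12 + O(z³)` as `z → 0⁺`. -/
theorem stmt_16 (w₀ β : ℝ → ℝ)
    (hw : ∀ z, w₀ z = 2 * Real.arsinh (Real.sqrt z / 2))
    (hβ : ∀ z, β z = (1 / 2) * (w₀ z + Real.sinh (w₀ z))) :
    ∃ C δ : ℝ, 0 < δ ∧ ∀ z : ℝ, 0 < z → z < δ →
      |β z ^ 2 - (z + z ^ 2 / 12)| ≤ C * z ^ 3 := by
  refine ⟨1 / 64, 4, by norm_num, fun z hz₀ hz₄ ↦ ?_⟩
  set t := √z / 2
  have ht₀ : 0 ≤ t := by positivity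
  have hz : z = 4 * t ^ 2 := by rw [div_pow, sq_sqrt hz₀.le]; ring
  have ht₁ : t ≤ 1 := by nlinarith
  have hβt : β z = arsinh t + t * √(1 + t ^ 2) := by
    rw [hβ, hw, half_two_mul_arsinh_add_sinh]
  rw [hβt, hz]
  convert abs_sq_sub_le_pow_six ht₀ ht₁ (le_arsinh_add_mul_sqrt ht₀) (arsinh_add_mul_sqrt_le ht₀)
    using 2 <;> ring
end
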